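/- Consider generalised scale-free percolation SFP on ℤ^d with an arbitrary vertex-weight distribution W ≥ 1 and a connection function h satisfying the edge-connection bounds with long-range parameter α ∈ (0,1]. Suppose the penalty function f has the property that there exist intervals [a,b] and [c,d] with P(W ∈ [a,b])·P(W ∈ [c,d]) > 0 and a constant K < ∞ such that f(w₁,w₂) < K whenever w₁ ∈ [a,b] and w₂ ∈ [c,d]. Then, for an arbitrary edge-length distribution L ≥ 0, the model is (f,L)-explosive; moreover, there exists T < ∞ such that with positive probability the origin is incident to infinitely many edges of cost at most T. -/

import Mathlib

/-! For `α ≤ 1` and weights in a bounded interval, an edge of Euclidean length `r` is present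
with probability at least `c₀ r^{-d}`, and `∑ ‖v‖^{-d}` diverges over `ℤ^d` (grouping the vertices
into shells `{v₀ = m + 2, 0 ≤ vᵢ < m + 2}` gives a harmonic series). Hence the edges from the
origin that are present, lead to a vertex of weight in `[c,e]` and have length at most `t` are
independent events of divergent total probability, and by the second Borel–Cantelli lemma almost
surely infinitely many of them occur. On the event `W₀ ∈ [a,b]`, of positive probability, each of
these edges costs at most `T = t · max K 0`, so infinitely many vertices lie within cost-distance
`T` of the origin and the explosion time is at most `T`. -/

open MeasureTheory ProbabilityTheory Filter Set
open scoped ENNReal NNReal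

noncomputable section

namespace SFP

/-- Euclidean norm on `ℝ^d` (realised as `Fin d → ℝ`). -/
def rnorm {d : ℕ} (x : Fin d → ℝ) : ℝ := Real.sqrt (∑ i, x i ^ 2)

/-- Euclidean norm of an integer vector in `ℤ^d`. -/
def znorm {d : ℕ} (x : Fin d → ℤ) : ℝ := rnorm fun i => (x i : ℝ)

/-- A function varies slowly at infinity. -/
def SlowlyVarying (l : ℝ → ℝ) : Prop :=
  ∀ c : ℝ, 0 < c → Tendsto (fun x => l (c * x) / l x) atTop (nhds 1)

/-- `l(w) = exp (-c₂ (log w)^γ)`. -/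
def lfun (c₂ γ w : ℝ) : ℝ := Real.exp (-c₂ * Real.log w ^ γ)

/-- Edge-connection bounds, with explicit constants, for long-range parameter `α ∈ (0,∞]`. -/
def EdgeBoundsC {d : ℕ} (h : (Fin d → ℝ) → ℝ → ℝ → ℝ) (α : ℝ≥0∞)
    (γ cl cu cl1 cu1 c₂ : ℝ) : Prop :=
  γ ∈ Set.Ioo (0 : ℝ) 1 ∧ 0 < cl ∧ 0 < cu ∧ 0 < cl1 ∧ 0 < cu1 ∧ 0 < c₂ ∧
    ((α ≠ ⊤ ∧ ∀ x : Fin d → ℝ, x ≠ 0 → ∀ w₁ w₂ : ℝ, 1 ≤ w₁ → 1 ≤ w₂ →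
        cl * min (lfun c₂ γ w₁ * lfun c₂ γ w₂)
            ((w₁ * w₂ / rnorm x ^ d) ^ α.toReal) ≤ h x w₁ w₂ ∧
          h x w₁ w₂ ≤ cu * min 1 ((w₁ * w₂ / rnorm x ^ d) ^ α.toReal)) ∨
      (α = ⊤ ∧ ∀ x : Fin d → ℝ, x ≠ 0 → ∀ w₁ w₂ : ℝ, 1 ≤ w₁ → 1 ≤ w₂ →
        cl * min (lfun c₂ γ w₁ * lfun c₂ γ w₂)
            (if rnorm x ^ d ≤ cl1 * (w₁ * w₂) then 1 else 0) ≤ h x w₁ w₂ ∧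
          h x w₁ w₂ ≤ cu * (if rnorm x ^ d ≤ cu1 * (w₁ * w₂) then 1 else 0)))

/-- Edge-connection bounds with long-range parameter `α ∈ (0,∞]`. -/
def EdgeBounds {d : ℕ} (h : (Fin d → ℝ) → ℝ → ℝ → ℝ) (α : ℝ≥0∞) : Prop :=
  ∃ γ cl cu cl1 cu1 c₂ : ℝ, EdgeBoundsC h α γ cl cu cl1 cu1 c₂

/-- The random variable `W` has power-law tails with exponent `τ` under `P`. -/
def PowerLawTails {Ω : Type*} [MeasurableSpace Ω] (P : Measure Ω) (W : Ω → ℝ)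
    (τ : ℝ) : Prop :=
  ∃ l : ℝ → ℝ, (∀ x : ℝ, 0 < x → 0 < l x) ∧ SlowlyVarying l ∧
    ∃ x₀ : ℝ, ∀ x : ℝ, x₀ ≤ x → (P {ω | x ≤ W ω}).toReal = l x * x ^ (-(τ - 1))

/-- The ratio `log F(t) / log t`, valued in `[0,∞]` (it equals `∞` when `F t = 0` and
`0 < t < 1`, matching the convention `log 0 = -∞`). -/
def betaRatio (F : ℝ → ℝ) (t : ℝ) : ℝ≥0∞ :=
  (if F t = 0 then ⊤ else ENNReal.ofReal (-Real.log (F t))) / ENNReal.ofReal (-Real.log t)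

/-- `β⁺ = limsup_{t↓0} log F(t)/log t ∈ [0,∞]`. -/
def betaPlus (F : ℝ → ℝ) : ℝ≥0∞ := limsup (betaRatio F) (nhdsWithin 0 (Set.Ioi 0))

/-- `β⁻ = liminf_{t↓0} log F(t)/log t ∈ [0,∞]`. -/
def betaMinus (F : ℝ → ℝ) : ℝ≥0∞ := liminf (betaRatio F) (nhdsWithin 0 (Set.Ioi 0))

/-- All the data of generalised scale-free percolation on `ℤ^d`:
a probability space, prototype weight and length variables `W, L`, a connection
function `h`, i.i.d. vertex weights `Wt`, i.i.d. uniform variables `U` and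
i.i.d. edge lengths `Len` indexed by unordered pairs of vertices. -/
structure Data (d : ℕ) (Ω : Type*) [MeasurableSpace Ω] where
  P : Measure Ω
  W : Ω → ℝ
  L : Ω → ℝ
  h : (Fin d → ℝ) → ℝ → ℝ → ℝ
  Wt : (Fin d → ℤ) → Ω → ℝ
  U : Sym2 (Fin d → ℤ) → Ω → ℝ
  Len : Sym2 (Fin d → ℤ) → Ω → ℝ

/-- Index type for the combined family of basic random variables. -/
inductive Idx (d : ℕ) : Type
  | wt : (Fin d → ℤ) → Idx d
  | unif : Sym2 (Fin d → ℤ) → Idx d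
  | len : Sym2 (Fin d → ℤ) → Idx d

variable {d : ℕ} {Ω : Type*} [MeasurableSpace Ω]

/-- The combined family of basic random variables. -/
def Data.family (M : Data d Ω) : Idx d → Ω → ℝ
  | .wt v => M.Wt v
  | .unif e => M.U e
  | .len e => M.Len e

/-- The model assumptions of generalised scale-free percolation: `P` is a probability
measure; `W ≥ 1` and `L ≥ 0`; `h` takes values in `[0,1]`; the weights are distributed
as `W`, the pair variables are uniform on `[0,1]`, the edge lengths are distributed as
`L`, and all these random variables are mutually independent. -/
def Data.Valid (M : Data d Ω) : Prop :=
  IsProbabilityMeasure M.P ∧ Measurable M.W ∧ Measurable M.L ∧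
    (∀ ω, 1 ≤ M.W ω) ∧ (∀ ω, 0 ≤ M.L ω) ∧
    (∀ x w₁ w₂, M.h x w₁ w₂ ∈ Set.Icc (0 : ℝ) 1) ∧
    (∀ i, Measurable (M.family i)) ∧
    (∀ v ω, 1 ≤ M.Wt v ω) ∧ (∀ e ω, 0 ≤ M.Len e ω) ∧
    (∀ v, Measure.map (M.Wt v) M.P = Measure.map M.W M.P) ∧
    (∀ e : Sym2 (Fin d → ℤ), ¬e.IsDiag →
      Measure.map (M.U e) M.P = volume.restrict (Set.Icc (0 : ℝ) 1)) ∧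
    (∀ e : Sym2 (Fin d → ℤ), ¬e.IsDiag →
      Measure.map (M.Len e) M.P = Measure.map M.L M.P) ∧
    iIndepFun M.family M.P

/-- Adjacency in the random graph at sample point `ω`: nearest-neighbour edges are
always present, and an edge between `u,v` with `‖u-v‖ > 1` is present iff the
attached uniform variable is at most `h (u-v) W_u W_v`. -/
def Data.Adj (M : Data d Ω) (ω : Ω) (u v : Fin d → ℤ) : Prop :=
  znorm (u - v) = 1 ∨
    (1 < znorm (u - v) ∧
      M.U s(u, v) ω ≤ M.h (fun i => ((u - v) i : ℝ)) (M.Wt u ω) (M.Wt v ω))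

/-- Cost of traversing the edge `{u,v}` from `u` to `v`, for penalty function `f`. -/
def Data.cost (M : Data d Ω) (f : ℝ → ℝ → ℝ) (ω : Ω) (u v : Fin d → ℤ) : ℝ :=
  M.Len s(u, v) ω * f (M.Wt u ω) (M.Wt v ω)

/-- `π` restricted to `{0,…,k}` is a self-avoiding path in the graph at `ω`. -/
def Data.IsPathSeg (M : Data d Ω) (ω : Ω) (k : ℕ) (π : ℕ → Fin d → ℤ) : Prop :=
  (∀ i, i < k → M.Adj ω (π i) (π (i + 1))) ∧
    ∀ i j, i ≤ k → j ≤ k → π i = π j → i = j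

/-- Total cost of the first `k` steps of `π`. -/
def Data.pathCost (M : Data d Ω) (f : ℝ → ℝ → ℝ) (ω : Ω) (k : ℕ)
    (π : ℕ → Fin d → ℤ) : ℝ≥0∞ :=
  ∑ i ∈ Finset.range k, ENNReal.ofReal (M.cost f ω (π i) (π (i + 1)))

/-- Cost-distance from `u` to `v`: the infimum of costs of paths from `u` to `v`. -/
def Data.costDist (M : Data d Ω) (f : ℝ → ℝ → ℝ) (ω : Ω) (u v : Fin d → ℤ) : ℝ≥0∞ :=
  ⨅ (k : ℕ) (π : ℕ → Fin d → ℤ) (_ : π 0 = u) (_ : π k = v)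
    (_ : M.IsPathSeg ω k π), M.pathCost f ω k π

/-- Explosion time `Y_f(v) = lim_{k→∞} inf { t : |B^{f,L}(v,t)| > k }`. -/
def Data.explosionTime (M : Data d Ω) (f : ℝ → ℝ → ℝ) (ω : Ω) (v : Fin d → ℤ) : ℝ≥0∞ :=
  ⨆ k : ℕ, sInf {t : ℝ≥0∞ |
    ∃ S : Finset (Fin d → ℤ), k < S.card ∧ ∀ u ∈ S, M.costDist f ω v u ≤ t}

/-- `π` is an infinite self-avoiding path starting at `v₀` in the graph at `ω`. -/
def Data.InfPath (M : Data d Ω) (ω : Ω) (v₀ : Fin d → ℤ) (π : ℕ → Fin d → ℤ) : Prop :=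
  π 0 = v₀ ∧ Function.Injective π ∧ ∀ i, M.Adj ω (π i) (π (i + 1))

/-- Total cost of an infinite path. -/
def Data.infPathCost (M : Data d Ω) (f : ℝ → ℝ → ℝ) (ω : Ω)
    (π : ℕ → Fin d → ℤ) : ℝ≥0∞ :=
  ∑' i, ENNReal.ofReal (M.cost f ω (π i) (π (i + 1)))

/-- The set of neighbours of `v` joined to `v` by an edge of cost at most `t`;
`N₁^t(v)` is its cardinality. -/
def Data.cheapNbrs (M : Data d Ω) (f : ℝ → ℝ → ℝ) (ω : Ω) (v : Fin d → ℤ)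
    (t : ℝ) : Set (Fin d → ℤ) :=
  {u | M.Adj ω v u ∧ M.cost f ω v u ≤ t}

/-- Cumulative distribution function `F_L` of the edge-length variable `L`. -/
def Data.cdf (M : Data d Ω) : ℝ → ℝ := fun t => (M.P {ω | M.L ω ≤ t}).toReal

/-- `f` is the polynomial penalty function with coefficients `a` and exponents
`μe, νe` over the finite index set `I`. -/
def IsPolyPenalty {ι : Type} (f : ℝ → ℝ → ℝ) (I : Finset ι) (a μe νe : ι → ℝ) : Prop :=
  I.Nonempty ∧ (∀ i ∈ I, 0 < a i ∧ 0 ≤ μe i ∧ 0 ≤ νe i) ∧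
    ∀ w₁ w₂ : ℝ, 1 ≤ w₁ → 1 ≤ w₂ → f w₁ w₂ = ∑ i ∈ I, a i * w₁ ^ μe i * w₂ ^ νe i

/-- `degf` is the degree `max_{i∈I} (μ_i + ν_i)` of the polynomial penalty. -/
def IsPolyDeg {ι : Type} (I : Finset ι) (μe νe : ι → ℝ) (degf : ℝ) : Prop :=
  (∀ i ∈ I, μe i + νe i ≤ degf) ∧ ∃ i ∈ I, μe i + νe i = degf

end SFP

section Probability

variable {Ω : Type*} [MeasurableSpace Ω] {μ : Measure Ω}

lemma ProbabilityTheory.iIndepFun.iIndepSet_iInter_preimage {ι τ κ β : Type*} [Fintype τ]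
    [MeasurableSpace β] {F : κ → Ω → β} (hF : iIndepFun F μ) (hFm : ∀ k, Measurable (F k))
    {g : ι × τ → κ} (hg : g.Injective) {C : ι → τ → Set β} (hC : ∀ i t, MeasurableSet (C i t)) :
    iIndepSet (fun i => ⋂ t, F (g (i, t)) ⁻¹' C i t) μ := by
  rw [iIndepSet_iff_meas_biInter fun i => .iInter fun t => hFm _ (hC i t)]
  intro S
  have hprod := (hF.precomp hg).meas_biInter (S := S ×ˢ Finset.univ) (s := fun p => F (g p) ⁻¹' C p.1 p.2)
    fun p _ => ⟨C p.1 p.2, hC _ _, rfl⟩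
  have hfactor : ∀ i, μ (⋂ t, F (g (i, t)) ⁻¹' C i t) = ∏ t, μ (F (g (i, t)) ⁻¹' C i t) :=
    fun i => (hF.precomp (hg.comp (Prod.mk_right_injective i))).meas_iInter
      fun t => ⟨C i t, hC i t, rfl⟩
  simp only [hfactor, ← Finset.prod_product']
  rw [← hprod]
  congr 1
  ext ω
  simp only [mem_iInter, mem_preimage, Finset.mem_product, Finset.mem_univ, and_true,
    Prod.forall]
  exact ⟨fun h i t hi => h i hi t, fun h i hi t => h i t hi⟩

lemma ProbabilityTheory.iIndepSet.ae_infinite_setOf_mem {ι : Type*} [Countable ι]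
    {s : ι → Set Ω} (hs : iIndepSet s μ) (hsm : ∀ i, MeasurableSet (s i))
    (hsum : ∑' i, μ (s i) = ∞) : ∀ᵐ ω ∂μ, {i | ω ∈ s i}.Infinite := by
  have := hs.isProbabilityMeasure
  have : Infinite ι := by
    by_contra hfin
    have := not_infinite_iff_finite.1 hfin
    have := Fintype.ofFinite ι
    rw [tsum_fintype] at hsum
    exact ENNReal.sum_ne_top.2 (fun i _ => measure_ne_top μ (s i)) hsum
  obtain ⟨_⟩ := nonempty_denumerable ι
  let g : ℕ ≃ ι := (Denumerable.eqv ι).symm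
  have hlim : μ (limsup (fun n => s (g n)) atTop) = 1 :=
    measure_limsup_eq_one (fun n => hsm (g n)) (hs.precomp g.injective) (by
      show ∑' n, μ (s (g n)) = ∞
      rwa [g.tsum_eq (fun i => μ (s i))])
  have hae : ∀ᵐ ω ∂μ, ω ∈ limsup (fun n => s (g n)) atTop := by
    refine (ae_mem_iff_measure_eq ?_).2 (by rw [hlim, measure_univ])
    exact (MeasurableSet.measurableSet_limsup fun n => hsm (g n)).nullMeasurableSet
  filter_upwards [hae] with ω hω
  have hfreq : {n | ω ∈ s (g n)}.Infinite :=
    Nat.frequently_atTop_iff_infinite.1 (mem_limsup_iff_frequently_mem.1 hω)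
  exact (hfreq.image g.injective.injOn).mono (by rintro _ ⟨n, hn, rfl⟩; exact hn)

lemma exists_measure_setOf_le_pos [NeZero μ] (X : Ω → ℝ) : ∃ t, 0 < μ {ω | X ω ≤ t} := by
  by_contra! h
  have hcover : (⋃ n : ℕ, {ω | X ω ≤ n}) = univ :=
    eq_univ_of_forall fun ω => mem_iUnion.2 (exists_nat_ge (X ω))
  have hnull : μ (⋃ n : ℕ, {ω | X ω ≤ n}) = 0 :=
    measure_iUnion_null fun n => nonpos_iff_eq_zero.1 (h n)
  exact NeZero.ne μ (Measure.measure_univ_eq_zero.1 (hcover ▸ hnull))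

end Probability

lemma ENNReal.tsum_ofReal_eq_top_of_not_summable {α : Type*} {f : α → ℝ} (hf : ∀ i, 0 ≤ f i)
    (h : ¬Summable f) : ∑' i, ENNReal.ofReal (f i) = ∞ := by
  by_contra hne
  exact h ((ENNReal.summable_toReal hne).congr fun i => ENNReal.toReal_ofReal (hf i))

namespace SFP

variable {d : ℕ}

lemma rnorm_zero : rnorm (0 : Fin d → ℝ) = 0 := by
  simp [rnorm]

lemma abs_le_rnorm (x : Fin d → ℝ) (i : Fin d) : |x i| ≤ rnorm x := by
  rw [rnorm, ← Real.sqrt_sq_eq_abs]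
  exact Real.sqrt_le_sqrt (Finset.single_le_sum (fun j _ => sq_nonneg (x j)) (Finset.mem_univ i))

lemma rnorm_le_mul_of_abs_le {x : Fin d → ℝ} {m : ℝ} (hm : 0 ≤ m) (h : ∀ i, |x i| ≤ m) :
    rnorm x ≤ d * m := by
  rw [rnorm, ← Real.sqrt_sq (by positivity : (0 : ℝ) ≤ d * m)]
  apply Real.sqrt_le_sqrt
  calc ∑ i, x i ^ 2 ≤ ∑ _i : Fin d, m ^ 2 := Finset.sum_le_sum fun i _ => by
        simpa only [sq_abs] using pow_le_pow_left₀ (abs_nonneg _) (h i) 2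
    _ = d * m ^ 2 := by simp
    _ ≤ (d * m) ^ 2 := by
        rw [mul_pow]
        gcongr
        exact_mod_cast Nat.le_self_pow two_ne_zero d

lemma znorm_zero : znorm (0 : Fin d → ℤ) = 0 := by
  simp [znorm, rnorm]

lemma znorm_neg (v : Fin d → ℤ) : znorm (-v) = znorm v := by
  simp [znorm, rnorm]

lemma lfun_antitoneOn {c₂ γ : ℝ} (hc₂ : 0 ≤ c₂) (hγ : 0 ≤ γ) : AntitoneOn (lfun c₂ γ) (Ici 1) := by
  intro w hw w' _ hww'
  have hlog : Real.log w ^ γ ≤ Real.log w' ^ γ :=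
    Real.rpow_le_rpow (Real.log_nonneg hw) (Real.log_le_log (by linarith [mem_Ici.1 hw]) hww') hγ
  exact Real.exp_le_exp.2 (by nlinarith)

/-- For `α ≤ 1` the factor `(w₁ w₂ / ‖x‖^d)^α` beats `‖x‖^{-d}`, and the factor `l(w₁) l(w₂)` is
bounded below once the weights are. -/
lemma EdgeBounds.exists_div_pow_le {h : (Fin d → ℝ) → ℝ → ℝ → ℝ} {α : ℝ≥0∞}
    (hEB : EdgeBounds h α) (hα : α ≤ 1) (B : ℝ) :
    ∃ c₀ > 0, ∀ x : Fin d → ℝ, 1 ≤ rnorm x → ∀ w₁ ∈ Icc 1 B, ∀ w₂ ∈ Icc 1 B,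
      c₀ / rnorm x ^ d ≤ h x w₁ w₂ := by
  obtain ⟨γ, cl, _, _, _, c₂, hγ, hcl, -, -, -, hc₂, hbounds⟩ := hEB
  have hαtop : α ≠ ⊤ := ne_top_of_le_ne_top ENNReal.one_ne_top hα
  have hα1 : α.toReal ≤ 1 := by simpa using ENNReal.toReal_mono ENNReal.one_ne_top hα
  have hlower := (hbounds.resolve_right fun h => hαtop h.1).2
  set m₀ := min (lfun c₂ γ B ^ 2) 1
  have hm₀ : 0 < m₀ := lt_min (pow_pos (Real.exp_pos _) 2) one_pos
  refine ⟨cl * m₀, mul_pos hcl hm₀, fun x hx w₁ hw₁ w₂ hw₂ => ?_⟩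
  have hxd : 1 ≤ rnorm x ^ d := one_le_pow₀ hx
  have hx0 : x ≠ 0 := by rintro rfl; rw [rnorm_zero] at hx; norm_num at hx
  refine le_trans ?_ (hlower x hx0 w₁ w₂ hw₁.1 hw₂.1).1
  rw [mul_div_assoc]
  refine mul_le_mul_of_nonneg_left (le_min ?_ ?_) hcl.le
  · have hl := lfun_antitoneOn hc₂.le hγ.1.le
    calc m₀ / rnorm x ^ d ≤ lfun c₂ γ B ^ 2 := (div_le_self hm₀.le hxd).trans (min_le_left _ _)
      _ ≤ lfun c₂ γ w₁ * lfun c₂ γ w₂ := by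
        rw [sq]
        exact mul_le_mul (hl hw₁.1 (hw₁.1.trans hw₁.2) hw₁.2) (hl hw₂.1 (hw₂.1.trans hw₂.2) hw₂.2)
          (Real.exp_pos _).le (Real.exp_pos _).le
  · have hr : 0 < 1 / rnorm x ^ d := by positivity
    calc m₀ / rnorm x ^ d ≤ 1 / rnorm x ^ d := by gcongr; exact min_le_right _ _
      _ ≤ (1 / rnorm x ^ d) ^ α.toReal :=
        Real.self_le_rpow_of_le_one hr.le ((div_le_one (by positivity)).2 hxd) hα1
      _ ≤ (w₁ * w₂ / rnorm x ^ d) ^ α.toReal := by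
        gcongr
        nlinarith [hw₁.1, hw₂.1]

def shellVertex (j : Σ m : ℕ, Fin d → Fin (m + 2)) : Fin (d + 1) → ℤ :=
  Fin.cons ((j.1 : ℤ) + 2) fun i => (j.2 i : ℤ)

lemma shellVertex_injective : Function.Injective (shellVertex (d := d)) := by
  rintro ⟨m, k⟩ ⟨m', k'⟩ h
  obtain ⟨hm, hk⟩ := Fin.cons_inj.1 h
  obtain rfl : m = m' := by simpa using hm
  simp only [Sigma.mk.injEq, heq_eq_eq, true_and]
  exact funext fun i => Fin.ext (by simpa using congrFun hk i)

lemma le_znorm_shellVertex (j : Σ m : ℕ, Fin d → Fin (m + 2)) :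
    (j.1 : ℝ) + 2 ≤ znorm (shellVertex j) := by
  simpa [znorm, shellVertex, abs_of_nonneg (by positivity : (0 : ℝ) ≤ j.1 + 2)] using
    abs_le_rnorm (fun i => (shellVertex j i : ℝ)) 0

lemma one_lt_znorm_shellVertex (j : Σ m : ℕ, Fin d → Fin (m + 2)) :
    1 < znorm (shellVertex j) := by
  have := le_znorm_shellVertex j
  have : (0 : ℝ) ≤ j.1 := j.1.cast_nonneg
  linarith

lemma znorm_shellVertex_le (j : Σ m : ℕ, Fin d → Fin (m + 2)) :
    znorm (shellVertex j) ≤ (d + 1) * ((j.1 : ℝ) + 2) := by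
  have hbound : ∀ i, |(shellVertex j i : ℝ)| ≤ (j.1 : ℝ) + 2 := by
    refine Fin.cases ?_ (fun i => ?_)
    · simp [shellVertex, abs_of_nonneg (by positivity : (0 : ℝ) ≤ j.1 + 2)]
    · have hi : ((j.2 i : ℕ) : ℝ) < j.1 + 2 := by exact_mod_cast (j.2 i).isLt
      simp [shellVertex]
      linarith
  exact_mod_cast rnorm_le_mul_of_abs_le (by positivity) hbound

/-- The `(m + 2)^d` shell vertices with first coordinate `m + 2` each contribute at least
`c ((d + 1)(m + 2))^{-(d+1)}`, so the shells contribute a harmonic series. -/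
lemma not_summable_div_znorm_shellVertex_pow {c : ℝ} (hc : 0 < c) :
    ¬Summable fun j : (Σ m : ℕ, Fin d → Fin (m + 2)) => c / znorm (shellVertex j) ^ (d + 1) := by
  intro hsum
  have hpos : ∀ j : (Σ m : ℕ, Fin d → Fin (m + 2)), 0 < znorm (shellVertex j) := fun j =>
    one_pos.trans (one_lt_znorm_shellVertex j)
  have hshells :=
    ((summable_sigma_of_nonneg fun j => (div_pos hc (pow_pos (hpos j) _)).le).1 hsum).2
  set c' := c / (d + 1) ^ (d + 1)
  have hharmonic : Summable fun m : ℕ => c' / ((m : ℝ) + 2) := by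
    refine hshells.of_nonneg_of_le (fun m => by positivity) fun m => ?_
    calc c' / ((m : ℝ) + 2)
        = ∑' _k : Fin d → Fin (m + 2), c / ((d + 1) * ((m : ℝ) + 2)) ^ (d + 1) := by
          simp only [tsum_fintype, Finset.sum_const, Finset.card_univ, Fintype.card_fun,
            Fintype.card_fin, nsmul_eq_mul, c']
          push_cast
          rw [mul_pow, pow_succ ((m : ℝ) + 2)]
          field_simp
      _ ≤ ∑' k, c / znorm (shellVertex ⟨m, k⟩) ^ (d + 1) := by
          simp only [tsum_fintype]
          exact Finset.sum_le_sum fun k _ => div_le_div_of_nonneg_left hc.le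
            (pow_pos (hpos _) _) (pow_le_pow_left₀ (hpos _).le (znorm_shellVertex_le _) _)
  have hinv : Summable fun n : ℕ => 1 / (n : ℝ) := by
    rw [← summable_nat_add_iff 2]
    refine (hharmonic.mul_left c'⁻¹).congr fun n => ?_
    have : c' ≠ 0 := by positivity
    push_cast
    field_simp
  exact Real.not_summable_one_div_natCast hinv

def edgeIdx (u v : Fin d → ℤ) : Fin 3 → Idx d :=
  ![.unif s(u, v), .wt v, .len s(u, v)]

lemma edgeIdx_injective2 (u : Fin d → ℤ) :
    Function.Injective fun p : (Fin d → ℤ) × Fin 3 => edgeIdx u p.1 p.2 := by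
  rintro ⟨v, k⟩ ⟨v', k'⟩ h
  fin_cases k <;> fin_cases k' <;> simp_all [edgeIdx] <;>
    exact h.elim id fun h => h.2.trans h.1

namespace Data

variable {Ω : Type*} [MeasurableSpace Ω] {M : Data d Ω}

lemma Valid.isProbabilityMeasure (hM : M.Valid) : IsProbabilityMeasure M.P := hM.1

lemma Valid.iIndepFun (hM : M.Valid) : iIndepFun M.family M.P := hM.2.2.2.2.2.2.2.2.2.2.2.2

lemma Valid.measurable_family (hM : M.Valid) (i : Idx d) : Measurable (M.family i) :=
  hM.2.2.2.2.2.2.1 i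

lemma Valid.h_le_one (hM : M.Valid) (x : Fin d → ℝ) (w₁ w₂ : ℝ) : M.h x w₁ w₂ ≤ 1 :=
  (hM.2.2.2.2.2.1 x w₁ w₂).2

lemma Valid.one_le_Wt (hM : M.Valid) (v : Fin d → ℤ) (ω : Ω) : 1 ≤ M.Wt v ω :=
  hM.2.2.2.2.2.2.2.1 v ω

lemma Valid.len_nonneg (hM : M.Valid) (e : Sym2 (Fin d → ℤ)) (ω : Ω) : 0 ≤ M.Len e ω :=
  hM.2.2.2.2.2.2.2.2.1 e ω

lemma Valid.measure_Wt_preimage (hM : M.Valid) (v : Fin d → ℤ) {s : Set ℝ}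
    (hs : MeasurableSet s) : M.P (M.Wt v ⁻¹' s) = M.P (M.W ⁻¹' s) := by
  have hm : Measurable (M.Wt v) := hM.measurable_family (.wt v)
  rw [← Measure.map_apply hm hs, hM.2.2.2.2.2.2.2.2.2.1 v,
    Measure.map_apply hM.2.1 hs]

lemma Valid.measure_Len_preimage (hM : M.Valid) {e : Sym2 (Fin d → ℤ)} (he : ¬e.IsDiag)
    {s : Set ℝ} (hs : MeasurableSet s) : M.P (M.Len e ⁻¹' s) = M.P (M.L ⁻¹' s) := by
  have hm : Measurable (M.Len e) := hM.measurable_family (.len e)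
  rw [← Measure.map_apply hm hs, hM.2.2.2.2.2.2.2.2.2.2.2.1 e he,
    Measure.map_apply hM.2.2.1 hs]

lemma Valid.measure_U_le (hM : M.Valid) {e : Sym2 (Fin d → ℤ)} (he : ¬e.IsDiag) {q : ℝ}
    (hq : q ∈ Icc 0 1) : M.P (M.U e ⁻¹' Iic q) = ENNReal.ofReal q := by
  have hm : Measurable (M.U e) := hM.measurable_family (.unif e)
  rw [← Measure.map_apply hm measurableSet_Iic,
    hM.2.2.2.2.2.2.2.2.2.2.1 e he, Measure.restrict_apply measurableSet_Iic]
  have hcap : Iic q ∩ Icc 0 1 = Icc 0 q := by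
    ext x
    simp only [mem_inter_iff, mem_Iic, mem_Icc]
    exact ⟨fun ⟨h, h₀, _⟩ => ⟨h₀, h⟩, fun ⟨h₀, h⟩ => ⟨h, h₀, h.trans hq.2⟩⟩
  rw [hcap, Real.volume_Icc, sub_zero]

def edgeEvent (M : Data d Ω) (u v : Fin d → ℤ) (q : ℝ) (s : Set ℝ) (t : ℝ) : Set Ω :=
  {ω | M.U s(u, v) ω ≤ q ∧ M.Wt v ω ∈ s ∧ M.Len s(u, v) ω ≤ t}

lemma edgeEvent_eq_iInter (M : Data d Ω) (u v : Fin d → ℤ) (q : ℝ) (s : Set ℝ) (t : ℝ) :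
    M.edgeEvent u v q s t = ⋂ k, M.family (edgeIdx u v k) ⁻¹' ![Iic q, s, Iic t] k := by
  ext ω
  simp [edgeEvent, Fin.forall_fin_succ, edgeIdx, family]

lemma measurableSet_edgeEvent (hM : M.Valid) (u v : Fin d → ℤ) (q : ℝ) {s : Set ℝ}
    (hs : MeasurableSet s) (t : ℝ) : MeasurableSet (M.edgeEvent u v q s t) := by
  rw [edgeEvent_eq_iInter]
  exact .iInter fun k => hM.measurable_family _ (by fin_cases k <;> simp [hs, measurableSet_Iic])

lemma measure_edgeEvent (hM : M.Valid) {u v : Fin d → ℤ} (huv : u ≠ v) {q : ℝ}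
    (hq : q ∈ Icc 0 1) {s : Set ℝ} (hs : MeasurableSet s) (t : ℝ) :
    M.P (M.edgeEvent u v q s t) = ENNReal.ofReal q * M.P (M.W ⁻¹' s) * M.P (M.L ⁻¹' Iic t) := by
  have hdiag : ¬(s(u, v)).IsDiag := by simpa using huv
  rw [edgeEvent_eq_iInter, (hM.iIndepFun.precomp
    ((edgeIdx_injective2 u).comp (Prod.mk_right_injective v))).meas_iInter, Fin.prod_univ_three]
  · simp only [edgeIdx, family, Matrix.cons_val_zero, Matrix.cons_val_one,
      Matrix.cons_val_two, Matrix.head_cons, Matrix.tail_cons]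
    rw [hM.measure_U_le hdiag hq, hM.measure_Wt_preimage v hs,
      hM.measure_Len_preimage hdiag measurableSet_Iic]
  · intro k
    fin_cases k
    exacts [⟨_, measurableSet_Iic, rfl⟩, ⟨_, hs, rfl⟩, ⟨_, measurableSet_Iic, rfl⟩]

lemma iIndepSet_edgeEvent (hM : M.Valid) (u : Fin d → ℤ) {ι : Type*} {v : ι → Fin d → ℤ}
    (hv : v.Injective) (q : ι → ℝ) {s : Set ℝ} (hs : MeasurableSet s) (t : ℝ) :
    iIndepSet (fun i => M.edgeEvent u (v i) (q i) s t) M.P := by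
  simp only [edgeEvent_eq_iInter]
  exact hM.iIndepFun.iIndepSet_iInter_preimage hM.measurable_family
    ((edgeIdx_injective2 u).comp (hv.prodMap Function.injective_id))
    fun i k => by fin_cases k <;> simp [hs, measurableSet_Iic]

lemma Adj.ne {ω : Ω} {u v : Fin d → ℤ} (h : M.Adj ω u v) : u ≠ v := by
  rintro rfl
  rcases h with h | ⟨h, -⟩ <;> norm_num [znorm_zero] at h

lemma costDist_le_cost {f : ℝ → ℝ → ℝ} {ω : Ω} {u v : Fin d → ℤ} (h : M.Adj ω u v) :
    M.costDist f ω u v ≤ ENNReal.ofReal (M.cost f ω u v) := by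
  let π : ℕ → Fin d → ℤ := fun i => if i = 0 then u else v
  have hπ : M.IsPathSeg ω 1 π := by
    refine ⟨fun i hi => ?_, fun i j hi hj hij => ?_⟩
    · obtain rfl : i = 0 := by omega
      exact h
    · interval_cases i <;> interval_cases j <;> simp_all [π, h.ne, h.ne.symm]
  refine iInf₂_le_of_le 1 π (iInf₂_le_of_le rfl rfl (iInf_le_of_le hπ ?_))
  simp [pathCost, π]

lemma explosionTime_le_of_infinite_cheapNbrs {f : ℝ → ℝ → ℝ} {ω : Ω} {v : Fin d → ℤ} {t : ℝ}
    (h : (M.cheapNbrs f ω v t).Infinite) : M.explosionTime f ω v ≤ ENNReal.ofReal t := by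
  refine iSup_le fun k => sInf_le ?_
  obtain ⟨S, hS, hcard⟩ := h.exists_subset_card_eq (k + 1)
  refine ⟨S, by omega, fun u hu => ?_⟩
  obtain ⟨hadj, hcost⟩ := hS hu
  exact (costDist_le_cost hadj).trans (ENNReal.ofReal_le_ofReal hcost)

lemma mem_cheapNbrs_of_mem_edgeEvent (hM : M.Valid) {f : ℝ → ℝ → ℝ} {ω : Ω}
    {u v : Fin d → ℤ} {q t K : ℝ} {s : Set ℝ} (hω : ω ∈ M.edgeEvent u v q s t)
    (huv : 1 < znorm (u - v)) (hq : q ≤ M.h (fun i => ((u - v) i : ℝ)) (M.Wt u ω) (M.Wt v ω))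
    (hK : ∀ w ∈ s, f (M.Wt u ω) w ≤ K) : v ∈ M.cheapNbrs f ω u (t * max K 0) := by
  obtain ⟨hU, hW, hL⟩ := hω
  refine ⟨Or.inr ⟨huv, hU.trans hq⟩, ?_⟩
  calc M.Len s(u, v) ω * f (M.Wt u ω) (M.Wt v ω)
      ≤ M.Len s(u, v) ω * max K 0 :=
        mul_le_mul_of_nonneg_left ((hK _ hW).trans (le_max_left K 0)) (hM.len_nonneg _ ω)
    _ ≤ t * max K 0 := mul_le_mul_of_nonneg_right hL (le_max_right K 0)

end Data

variable {Ω : Type*} [MeasurableSpace Ω]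

lemma Data.ae_infinite_shell_edgeEvent {M : Data (d + 1) Ω} (hM : M.Valid) {c₀ : ℝ}
    (hc₀ : 0 < c₀)
    (hq : ∀ j : Σ m : ℕ, Fin d → Fin (m + 2), c₀ / znorm (shellVertex j) ^ (d + 1) ≤ 1)
    {s : Set ℝ} (hs : MeasurableSet s) (hsW : 0 < M.P (M.W ⁻¹' s)) {t : ℝ}
    (ht : 0 < M.P (M.L ⁻¹' Iic t)) :
    ∀ᵐ ω ∂M.P, {j | ω ∈ M.edgeEvent 0 (shellVertex j)
      (c₀ / znorm (shellVertex j) ^ (d + 1)) s t}.Infinite := by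
  have hq' : ∀ j, c₀ / znorm (shellVertex j) ^ (d + 1) ∈ Icc 0 1 := fun j =>
    ⟨div_nonneg hc₀.le (pow_nonneg (one_pos.trans (one_lt_znorm_shellVertex j)).le _), hq j⟩
  have hne : ∀ j, (0 : Fin (d + 1) → ℤ) ≠ shellVertex j := fun j h => by
    have := one_lt_znorm_shellVertex j
    rw [← h, znorm_zero] at this
    norm_num at this
  refine (M.iIndepSet_edgeEvent hM 0 shellVertex_injective _ hs t).ae_infinite_setOf_mem
    (fun j => M.measurableSet_edgeEvent hM _ _ _ hs t) ?_
  calc ∑' j, M.P (M.edgeEvent 0 (shellVertex j) (c₀ / znorm (shellVertex j) ^ (d + 1)) s t)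
      = ∑' j, ENNReal.ofReal (c₀ / znorm (shellVertex j) ^ (d + 1)) *
          M.P (M.W ⁻¹' s) * M.P (M.L ⁻¹' Iic t) :=
        tsum_congr fun j => measure_edgeEvent hM (hne j) (hq' j) hs t
    _ = ∞ := by
      rw [ENNReal.tsum_mul_right, ENNReal.tsum_mul_right,
        ENNReal.tsum_ofReal_eq_top_of_not_summable (fun j => (hq' j).1)
          (not_summable_div_znorm_shellVertex_pow hc₀),
        ENNReal.top_mul hsW.ne', ENNReal.top_mul ht.ne']

lemma Data.infinite_cheapNbrs_of_infinite_shell_edgeEvent {M : Data (d + 1) Ω} (hM : M.Valid)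
    {f : ℝ → ℝ → ℝ} {ω : Ω} {c₀ B K t : ℝ} {s : Set ℝ}
    (hconn : ∀ x : Fin (d + 1) → ℝ, 1 ≤ rnorm x → ∀ w₁ ∈ Icc 1 B, ∀ w₂ ∈ Icc 1 B,
      c₀ / rnorm x ^ (d + 1) ≤ M.h x w₁ w₂)
    (hsB : s ⊆ Iic B) (hω₀ : M.Wt 0 ω ≤ B) (hK : ∀ w ∈ s, f (M.Wt 0 ω) w ≤ K)
    (hω : {j | ω ∈ M.edgeEvent 0 (shellVertex j)
      (c₀ / znorm (shellVertex j) ^ (d + 1)) s t}.Infinite) :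
    (M.cheapNbrs f ω 0 (t * max K 0)).Infinite := by
  refine (hω.image shellVertex_injective.injOn).mono ?_
  rintro _ ⟨j, hj, rfl⟩
  have hnorm : znorm (0 - shellVertex j) = znorm (shellVertex j) := by rw [zero_sub, znorm_neg]
  have h1 : 1 < znorm (0 - shellVertex j) := hnorm ▸ one_lt_znorm_shellVertex j
  have hq := hconn (fun i => ((0 - shellVertex j) i : ℝ)) h1.le
    _ ⟨hM.one_le_Wt 0 ω, hω₀⟩ _ ⟨hM.one_le_Wt _ ω, hsB hj.2.1⟩
  change c₀ / znorm (0 - shellVertex j) ^ (d + 1) ≤ _ at hq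
  rw [hnorm] at hq
  exact M.mem_cheapNbrs_of_mem_edgeEvent hM hj h1 hq hK

end SFP

theorem sfp_bounded_penalty_explosive_general
    {d : ℕ} (hd : 1 ≤ d) {Ω : Type*} [MeasurableSpace Ω] (M : SFP.Data d Ω)
    (hM : M.Valid)
    (α : ℝ≥0∞) (hα1 : α ≤ 1) (hEB : SFP.EdgeBounds M.h α)
    (f : ℝ → ℝ → ℝ)
    (a b c e : ℝ)
    (hab : 0 < M.P {ω | M.W ω ∈ Set.Icc a b})
    (hce : 0 < M.P {ω | M.W ω ∈ Set.Icc c e})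
    (K : ℝ) (hK : ∀ w₁ ∈ Set.Icc a b, ∀ w₂ ∈ Set.Icc c e, f w₁ w₂ < K) :
    0 < M.P {ω | M.explosionTime f ω 0 < ⊤} ∧
      ∃ T : ℝ, 0 < M.P {ω | (M.cheapNbrs f ω 0 T).Infinite} := by
  obtain ⟨d, rfl⟩ : ∃ n, d = n + 1 := ⟨d - 1, by omega⟩
  have := hM.isProbabilityMeasure
  obtain ⟨t, ht⟩ := exists_measure_setOf_le_pos (μ := M.P) M.L
  set B := max 1 (max b e)
  have h1B : (1 : ℝ) ∈ Icc 1 B := ⟨le_rfl, le_max_left _ _⟩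
  obtain ⟨c₀, hc₀, hconn⟩ := hEB.exists_div_pow_le hα1 B
  have hae := M.ae_infinite_shell_edgeEvent hM hc₀
    (fun j => (hconn _ (SFP.one_lt_znorm_shellVertex j).le 1 h1B 1 h1B).trans (hM.h_le_one _ _ _))
    measurableSet_Icc hce ht
  set G := {ω | M.Wt 0 ω ∈ Icc a b} ∩ {ω | {j | ω ∈ M.edgeEvent 0 (SFP.shellVertex j)
    (c₀ / SFP.znorm (SFP.shellVertex j) ^ (d + 1)) (Icc c e) t}.Infinite}
  have hgood : ∀ ω ∈ G, (M.cheapNbrs f ω 0 (t * max K 0)).Infinite := fun ω hω =>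
    M.infinite_cheapNbrs_of_infinite_shell_edgeEvent hM hconn
      (fun _ hw => hw.2.trans ((le_max_right b e).trans (le_max_right 1 _)))
      (hω.1.2.trans ((le_max_left b e).trans (le_max_right 1 _)))
      (fun w hw => (hK _ hω.1 w hw).le) hω.2
  have hpos : 0 < M.P G := by
    rw [measure_inter_conull (mem_ae_iff.1 hae)]
    exact (hM.measure_Wt_preimage 0 measurableSet_Icc).symm ▸ hab
  refine ⟨hpos.trans_le (measure_mono fun ω hω => ?_), _, hpos.trans_le (measure_mono hgood)⟩
  exact (M.explosionTime_le_of_infinite_cheapNbrs (hgood ω hω)).trans_lt ENNReal.ofReal_lt_top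

/-- For SFP on `ℤ^d` with arbitrary weight distribution `W ≥ 1` and
long-range parameter `α ∈ (0,1]`: if the penalty function `f` is bounded by some
`K < ∞` on a product of weight intervals `[a,b] × [c,e]`, each of which is charged
with positive probability by `W`, then for arbitrary edge-length distribution `L ≥ 0`
the model is `(f,L)`-explosive; moreover there is `T < ∞` such that with positive
probability the origin is incident to infinitely many edges of cost at most `T`. -/
theorem sfp_bounded_penalty_explosive
    {d : ℕ} (hd : 1 ≤ d) {Ω : Type*} [MeasurableSpace Ω] (M : SFP.Data d Ω)
    (hM : M.Valid)
    (α : ℝ≥0∞) (hα0 : 0 < α) (hα1 : α ≤ 1) (hEB : SFP.EdgeBounds M.h α)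
    (f : ℝ → ℝ → ℝ) (hf : ∀ w₁ w₂ : ℝ, 1 ≤ w₁ → 1 ≤ w₂ → 0 < f w₁ w₂)
    (a b c e : ℝ)
    (hab : 0 < M.P {ω | M.W ω ∈ Set.Icc a b})
    (hce : 0 < M.P {ω | M.W ω ∈ Set.Icc c e})
    (K : ℝ) (hK : ∀ w₁ ∈ Set.Icc a b, ∀ w₂ ∈ Set.Icc c e, f w₁ w₂ < K) :
    0 < M.P {ω | M.explosionTime f ω 0 < ⊤} ∧
      ∃ T : ℝ, 0 < M.P {ω | (M.cheapNbrs f ω 0 T).Infinite} :=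
  sfp_bounded_penalty_explosive_general hd M hM α hα1 hEB f a b c e hab hce K hK
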